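/- arXiv:2110.15572 — 2 statements merged into one kernel-verified Lean document; each statement's English description precedes it below -/
import Mathlib

section
/- Non-uniform smoothness of the softmax expected reward: let S(θ) ∈ ℝ^{K×K} denote the Hessian of the map θ ↦ π_θᵀ r at θ. Then for every θ ∈ ℝ^K and every y ∈ ℝ^K, |yᵀ S(θ) y| ≤ 3·‖d(π_θᵀ r)/dθ‖₂·‖y‖₂²; in particular the spectral radius of S(θ) is at most 3·‖d(π_θᵀ r)/dθ‖₂. -/
/-!
The gradient of `θ ↦ π_θᵀ r` is `g = π_θ ⊙ (r - π_θᵀ r)`; differentiating once more gives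
`yᵀ S(θ) y = ∑ₐ g(a) y(a)² - 2 (gᵀ y) (π_θᵀ y)`. The first term is at most
`‖g‖_∞ ‖y‖₂² ≤ ‖g‖₂ ‖y‖₂²`, and by Cauchy–Schwarz the second is at most
`2 ‖g‖₂ ‖y‖₂ · ‖π_θ‖₂ ‖y‖₂`, where `‖π_θ‖₂ ≤ ‖π_θ‖₁ = 1`.
-/

open Finset Real Filter

/-- Softmax policy: `π_θ(a) = exp(θ(a)) / Σ_{a'} exp(θ(a'))`. -/
noncomputable def softmax {K : ℕ} (θ : Fin K → ℝ) (a : Fin K) : ℝ :=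
  Real.exp (θ a) / ∑ a', Real.exp (θ a')

/-- Expected reward `π_θᵀ r`. -/
noncomputable def expReward {K : ℕ} (r θ : Fin K → ℝ) : ℝ :=
  ∑ a, softmax θ a * r a

/-- Policy gradient component `(d π_θᵀ r / dθ)(a) = π_θ(a)·(r(a) − π_θᵀ r)`. -/
noncomputable def pgrad {K : ℕ} (r θ : Fin K → ℝ) (a : Fin K) : ℝ :=
  softmax θ a * (r a - expReward r θ)

/-- Euclidean norm of the policy gradient. -/
noncomputable def pgradNorm {K : ℕ} (r θ : Fin K → ℝ) : ℝ :=
  Real.sqrt (∑ a, pgrad r θ a ^ 2)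

section RealVectors

variable {ι : Type*} [Fintype ι]

noncomputable def dotCLM (c : ι → ℝ) : (ι → ℝ) →L[ℝ] ℝ :=
  ∑ i, c i • ContinuousLinearMap.proj i

@[simp] lemma dotCLM_apply (c v : ι → ℝ) : dotCLM c v = c ⬝ᵥ v := by
  simp [dotCLM, dotProduct]

lemma abs_le_sqrt_sum_sq (u : ι → ℝ) (a : ι) : |u a| ≤ √(∑ i, u i ^ 2) :=
  abs_le_sqrt (single_le_sum (fun i _ => sq_nonneg (u i)) (mem_univ a))

lemma abs_dotProduct_le_sqrt_mul_sqrt (u v : ι → ℝ) :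
    |u ⬝ᵥ v| ≤ √(∑ i, u i ^ 2) * √(∑ i, v i ^ 2) := by
  rw [← sqrt_mul (sum_nonneg fun i _ => sq_nonneg (u i))]
  exact abs_le_sqrt (sum_mul_sq_le_sq_mul_sq _ _ _)

lemma sqrt_sum_sq_le_one {p : ι → ℝ} (hp : ∀ i, 0 ≤ p i) (hp1 : ∑ i, p i ≤ 1) :
    √(∑ i, p i ^ 2) ≤ 1 := by
  rw [sqrt_le_one]
  calc ∑ i, p i ^ 2 ≤ (∑ i, p i) ^ 2 := sum_sq_le_sq_sum_of_nonneg fun i _ => hp i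
    _ ≤ 1 := pow_le_one₀ (sum_nonneg fun i _ => hp i) hp1

lemma abs_sum_mul_sq_le (g y : ι → ℝ) :
    |∑ i, g i * y i ^ 2| ≤ √(∑ i, g i ^ 2) * ∑ i, y i ^ 2 := by
  rw [mul_sum]
  refine (abs_sum_le_sum_abs _ _).trans (sum_le_sum fun i _ => ?_)
  rw [abs_mul, abs_of_nonneg (sq_nonneg (y i))]
  exact mul_le_mul_of_nonneg_right (abs_le_sqrt_sum_sq g i) (sq_nonneg (y i))

lemma abs_sum_mul_sq_sub_two_mul_le {g p : ι → ℝ} (hp : ∀ i, 0 ≤ p i) (hp1 : ∑ i, p i ≤ 1)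
    (y : ι → ℝ) :
    |∑ i, g i * y i ^ 2 - 2 * (g ⬝ᵥ y) * (p ⬝ᵥ y)| ≤ 3 * √(∑ i, g i ^ 2) * ∑ i, y i ^ 2 := by
  set ng := √(∑ i, g i ^ 2)
  set ny := √(∑ i, y i ^ 2)
  have hny : ny * ny = ∑ i, y i ^ 2 := mul_self_sqrt (sum_nonneg fun i _ => sq_nonneg (y i))
  have hpy : |p ⬝ᵥ y| ≤ ny := by
    calc |p ⬝ᵥ y| ≤ √(∑ i, p i ^ 2) * ny := abs_dotProduct_le_sqrt_mul_sqrt p y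
      _ ≤ 1 * ny := by gcongr; exact sqrt_sum_sq_le_one hp hp1
      _ = ny := one_mul ny
  have hcross : |g ⬝ᵥ y| * |p ⬝ᵥ y| ≤ ng * ∑ i, y i ^ 2 := by
    rw [← hny, ← mul_assoc]
    exact mul_le_mul (abs_dotProduct_le_sqrt_mul_sqrt g y) hpy (abs_nonneg _) (by positivity)
  calc |∑ i, g i * y i ^ 2 - 2 * (g ⬝ᵥ y) * (p ⬝ᵥ y)|
      ≤ |∑ i, g i * y i ^ 2| + 2 * (|g ⬝ᵥ y| * |p ⬝ᵥ y|) := by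
        refine (abs_sub _ _).trans_eq ?_
        rw [abs_mul, abs_mul, abs_two, mul_assoc]
    _ ≤ 3 * ng * ∑ i, y i ^ 2 := by linarith [abs_sum_mul_sq_le g y]

end RealVectors

section Softmax

variable {K : ℕ}

lemma sum_exp_pos (θ : Fin K → ℝ) (a : Fin K) : 0 < ∑ a', exp (θ a') :=
  sum_pos (fun _ _ => exp_pos _) ⟨a, mem_univ a⟩

lemma softmax_nonneg (θ : Fin K → ℝ) (a : Fin K) : 0 ≤ softmax θ a :=
  div_nonneg (exp_pos _).le (sum_nonneg fun _ _ => (exp_pos _).le)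

lemma sum_softmax_le_one (θ : Fin K → ℝ) : ∑ a, softmax θ a ≤ 1 := by
  simp only [softmax, ← sum_div]
  exact div_self_le_one _

lemma hasFDerivAt_softmax (θ : Fin K → ℝ) (a : Fin K) :
    HasFDerivAt (softmax · a)
      (softmax θ a • (ContinuousLinearMap.proj a - dotCLM (softmax θ))) θ := by
  have hZ : HasFDerivAt (fun θ' : Fin K → ℝ => ∑ a', exp (θ' a'))
      (∑ a', exp (θ a') • ContinuousLinearMap.proj a') θ :=
    HasFDerivAt.fun_sum fun a' _ => (hasFDerivAt_apply a' θ).exp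
  have hZ0 := (sum_exp_pos θ a).ne'
  refine ((hasFDerivAt_apply a θ).exp.fun_mul
    ((hasFDerivAt_inv hZ0).comp θ hZ)).congr_fderiv ?_
  ext v
  have hπv : softmax θ ⬝ᵥ v = (∑ x, exp (θ x) * v x) / ∑ a', exp (θ a') := by
    simp only [dotProduct, softmax, div_mul_eq_mul_div, sum_div]
  simp only [add_apply, smul_apply, sub_apply, ContinuousLinearMap.comp_apply, _root_.sum_apply,
    ContinuousLinearMap.proj_apply, ContinuousLinearMap.toSpanSingleton_apply, Function.comp_apply,
    map_sum, smul_eq_mul, mul_neg, sum_neg_distrib, ← sum_mul, dotCLM_apply, hπv, softmax]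
  field_simp
  ring

lemma hasFDerivAt_expReward (r θ : Fin K → ℝ) :
    HasFDerivAt (expReward r) (dotCLM (pgrad r θ)) θ := by
  have h := HasFDerivAt.fun_sum (u := univ) fun a _ => (hasFDerivAt_softmax θ a).mul_const (r a)
  refine h.congr_fderiv ?_
  ext v
  simp only [_root_.sum_apply, smul_apply, sub_apply, ContinuousLinearMap.proj_apply,
    dotCLM_apply, smul_eq_mul, dotProduct, pgrad, expReward, mul_sub, sub_mul, sum_sub_distrib,
    mul_sum, sum_mul]
  rw [sum_comm]
  congr 1 <;> refine sum_congr rfl fun _ _ => ?_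
  · ring
  · exact sum_congr rfl fun _ _ => by ring

lemma fderiv_expReward (r : Fin K → ℝ) :
    fderiv ℝ (expReward r) = fun θ => dotCLM (pgrad r θ) :=
  funext fun θ => (hasFDerivAt_expReward r θ).fderiv

lemma hasFDerivAt_pgrad (r θ : Fin K → ℝ) (a : Fin K) :
    HasFDerivAt (pgrad r · a)
      (softmax θ a • -dotCLM (pgrad r θ) +
        (r a - expReward r θ) • softmax θ a • (ContinuousLinearMap.proj a - dotCLM (softmax θ)))
      θ :=
  (hasFDerivAt_softmax θ a).mul ((hasFDerivAt_expReward r θ).const_sub (r a))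

lemma hasFDerivAt_dotCLM_pgrad (r θ : Fin K → ℝ) :
    HasFDerivAt (fun θ' => dotCLM (pgrad r θ'))
      (∑ a, (softmax θ a • -dotCLM (pgrad r θ) + (r a - expReward r θ) • softmax θ a •
        (ContinuousLinearMap.proj a - dotCLM (softmax θ))).smulRight (ContinuousLinearMap.proj a))
      θ :=
  HasFDerivAt.fun_sum (A := fun a θ' => pgrad r θ' a • ContinuousLinearMap.proj a)
    fun a _ => (hasFDerivAt_pgrad r θ a).smul_const
      (ContinuousLinearMap.proj (R := ℝ) (φ := fun _ : Fin K => ℝ) a)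

lemma iteratedFDeriv_two_expReward (r θ y : Fin K → ℝ) :
    iteratedFDeriv ℝ 2 (expReward r) θ ![y, y] =
      ∑ a, pgrad r θ a * y a ^ 2 - 2 * (pgrad r θ ⬝ᵥ y) * (softmax θ ⬝ᵥ y) := by
  rw [iteratedFDeriv_two_apply, fderiv_expReward, (hasFDerivAt_dotCLM_pgrad r θ).fderiv]
  simp only [Matrix.cons_val_zero, Matrix.cons_val_one, Matrix.cons_val_fin_one,
    _root_.sum_apply, ContinuousLinearMap.smulRight_apply, add_apply, smul_apply, neg_apply,
    sub_apply, ContinuousLinearMap.proj_apply, dotCLM_apply, smul_eq_mul]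
  calc _ = ∑ a, (pgrad r θ a * y a ^ 2 - pgrad r θ a * y a * (softmax θ ⬝ᵥ y)
          - softmax θ a * y a * (pgrad r θ ⬝ᵥ y)) :=
        sum_congr rfl fun a _ => by rw [pgrad]; ring
    _ = _ := by
        simp only [sum_sub_distrib, ← sum_mul, dotProduct]
        ring

end Softmax

theorem softmax_nonuniform_smoothness_general
    {K : ℕ} (r : Fin K → ℝ)
    (θ y : Fin K → ℝ) :
    |iteratedFDeriv ℝ 2 (fun θ' : Fin K → ℝ => expReward r θ') θ ![y, y]| ≤
      3 * pgradNorm r θ * ∑ i, y i ^ 2 := by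
  rw [iteratedFDeriv_two_expReward]
  exact abs_sum_mul_sq_sub_two_mul_le (softmax_nonneg θ) (sum_softmax_le_one θ) y

/-- Non-uniform smoothness of the softmax expected reward: the Hessian `S(θ)`
(the second derivative of `θ ↦ π_θᵀ r`) satisfies
`|yᵀ S(θ) y| ≤ 3·‖d(π_θᵀ r)/dθ‖₂·‖y‖₂²` for all `θ, y ∈ ℝ^K`. -/
theorem softmax_nonuniform_smoothness
    {K : ℕ} (hK : 2 ≤ K) (r : Fin K → ℝ)
    (hr : ∀ a, 0 < r a ∧ r a ≤ 1)
    (θ y : Fin K → ℝ) :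
    |iteratedFDeriv ℝ 2 (fun θ' : Fin K → ℝ => expReward r θ') θ ![y, y]| ≤
      3 * pgradNorm r θ * ∑ i, y i ^ 2 :=
  softmax_nonuniform_smoothness_general r θ y
end

section
/- On-policy stochastic GNPG fails with positive probability: consider an on-policy process with the stochastic GNPG update θ_{t+1} := θ_t + η·g_{a_t}(θ_t)/‖g_{a_t}(θ_t)‖₂ (η > 0; these stochastic gradients are nonzero since π_{θ_t} has full support and r(a) > 0). Then for every action a ∈ [K]: P(a_t = a for all t ≥ 1) ≥ exp(−(√2·e^{η/√2}/η)·(Σ_{a' ≠ a} e^{θ_1(a')})/e^{θ_1(a)}) > 0, and on the event {a_t = a for all t ≥ 1} one has π_{θ_t}(a) → 1 as t → ∞. Hence for every a ∈ [K], with positive probability π_{θ_t}(a) → 1. -/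
open Finset Real Filter MeasureTheory

/-- On-policy IS stochastic softmax policy gradient for sampled action `a`:
`g_a(θ)(i) = 1{i = a}·r(a) − π_θ(i)·r(a)`. -/
noncomputable def stochPG {K : ℕ} (r : Fin K → ℝ) (a : Fin K) (θ : Fin K → ℝ)
    (i : Fin K) : ℝ :=
  (if i = a then r a else 0) - softmax θ i * r a

/-- Euclidean norm of the stochastic softmax policy gradient. -/
noncomputable def stochPGNorm {K : ℕ} (r : Fin K → ℝ) (a : Fin K) (θ : Fin K → ℝ) : ℝ :=
  Real.sqrt (∑ i, stochPG r a θ i ^ 2)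

/-! Along the event that action `a` is sampled at every step, the iterates are deterministic.
Since `‖g_a(θ)‖₂ ≤ √2 · r(a)(1 - π_θ(a))`, each normalised step raises `θ(a) - θ(i)` by at least
`η/√2` for every `i ≠ a`, so the odds against `a`, `S(θ) = (1 - π_θ(a))/π_θ(a)`, decay
geometrically: `S(θ_t) ≤ e^{-tη/√2} S(θ_1)`. Hence `π_{θ_t}(a) = 1/(1 + S(θ_t)) → 1`, and the
probability of sampling `a` during the first `T` steps is
`∏ π_{θ_t}(a) ≥ exp(-∑ S(θ_t)) ≥ exp(-S(θ_1)/(1 - e^{-η/√2}))`, which dominates the stated bound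
because `1 - e^{-x} ≥ x e^{-x}`. Continuity of `P` from above lets `T → ∞`. -/

open scoped Topology

section Softmax

variable {K : ℕ}

noncomputable def oddsAgainst (a : Fin K) (θ : Fin K → ℝ) : ℝ :=
  (∑ i ∈ univ.filter (· ≠ a), exp (θ i)) / exp (θ a)

lemma oddsAgainst_nonneg (a : Fin K) (θ : Fin K → ℝ) : 0 ≤ oddsAgainst a θ := by
  unfold oddsAgainst; positivity

lemma oddsAgainst_eq_sum_exp_sub (a : Fin K) (θ : Fin K → ℝ) :
    oddsAgainst a θ = ∑ i ∈ univ.filter (· ≠ a), exp (θ i - θ a) := by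
  simp only [oddsAgainst, sum_div, exp_sub]

lemma softmax_eq_inv_one_add_oddsAgainst (a : Fin K) (θ : Fin K → ℝ) :
    softmax θ a = (1 + oddsAgainst a θ)⁻¹ := by
  rw [softmax, oddsAgainst, filter_ne', ← add_sum_erase _ _ (mem_univ a)]
  field_simp

lemma exp_neg_oddsAgainst_le_softmax (a : Fin K) (θ : Fin K → ℝ) :
    exp (-oddsAgainst a θ) ≤ softmax θ a := by
  rw [softmax_eq_inv_one_add_oddsAgainst, exp_neg]
  have hodds := oddsAgainst_nonneg a θ
  gcongr
  linarith [add_one_le_exp (oddsAgainst a θ)]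

lemma softmax_pos (θ : Fin K → ℝ) (i : Fin K) : 0 < softmax θ i :=
  div_pos (exp_pos _) (sum_pos (fun _ _ => exp_pos _) ⟨i, mem_univ i⟩)

lemma one_sub_softmax_eq_sum_erase (θ : Fin K → ℝ) (a : Fin K) :
    1 - softmax θ a = ∑ i ∈ univ.erase a, softmax θ i := by
  have hsum : ∑ i, softmax θ i = 1 := by
    simp only [softmax, ← sum_div]
    exact div_self (sum_pos (fun _ _ => exp_pos _) ⟨a, mem_univ a⟩).ne'
  rw [← hsum, ← add_sum_erase _ _ (mem_univ a), add_sub_cancel_left]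

lemma softmax_le_one_sub_softmax {θ : Fin K → ℝ} {i a : Fin K} (hi : i ≠ a) :
    softmax θ i ≤ 1 - softmax θ a := by
  rw [one_sub_softmax_eq_sum_erase]
  exact single_le_sum (fun j _ => (softmax_pos θ j).le) (mem_erase.2 ⟨hi, mem_univ i⟩)

lemma softmax_le_one (θ : Fin K → ℝ) (a : Fin K) : softmax θ a ≤ 1 := by
  rw [← sub_nonneg, one_sub_softmax_eq_sum_erase]
  exact sum_nonneg fun j _ => (softmax_pos θ j).le

end Softmax

section StochPG

variable {K : ℕ} (r : Fin K → ℝ) (a : Fin K) (θ : Fin K → ℝ)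

lemma stochPG_self : stochPG r a θ a = r a * (1 - softmax θ a) := by
  rw [stochPG, if_pos rfl]; ring

lemma stochPG_of_ne {i : Fin K} (hi : i ≠ a) : stochPG r a θ i = -(softmax θ i * r a) := by
  simp only [stochPG, if_neg hi]; ring

lemma stochPG_self_le_stochPGNorm : stochPG r a θ a ≤ stochPGNorm r a θ :=
  le_sqrt_of_sq_le (single_le_sum (f := fun i => stochPG r a θ i ^ 2)
    (fun _ _ => sq_nonneg _) (mem_univ a))

lemma stochPGNorm_le_sqrt_two_mul (hra : 0 ≤ r a) :
    stochPGNorm r a θ ≤ √2 * (r a * (1 - softmax θ a)) := by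
  have hq : 0 ≤ r a * (1 - softmax θ a) := mul_nonneg hra (sub_nonneg.2 (softmax_le_one θ a))
  have hrest : ∑ i ∈ univ.erase a, stochPG r a θ i ^ 2 ≤ (r a * (1 - softmax θ a)) ^ 2 := by
    calc ∑ i ∈ univ.erase a, stochPG r a θ i ^ 2
        = ∑ i ∈ univ.erase a, (softmax θ i * r a) ^ 2 :=
          sum_congr rfl fun i hi => by rw [stochPG_of_ne r a θ (ne_of_mem_erase hi), neg_sq]
      _ ≤ (∑ i ∈ univ.erase a, softmax θ i * r a) ^ 2 :=
          sum_sq_le_sq_sum_of_nonneg fun i _ => mul_nonneg (softmax_pos θ i).le hra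
      _ = (r a * (1 - softmax θ a)) ^ 2 := by
          rw [← sum_mul, ← one_sub_softmax_eq_sum_erase, mul_comm]
  have hsq : ∑ i, stochPG r a θ i ^ 2 ≤ 2 * (r a * (1 - softmax θ a)) ^ 2 := by
    rw [← add_sum_erase _ _ (mem_univ a), stochPG_self]
    linarith
  calc stochPGNorm r a θ ≤ √(2 * (r a * (1 - softmax θ a)) ^ 2) := sqrt_le_sqrt hsq
    _ = √2 * (r a * (1 - softmax θ a)) := by rw [sqrt_mul zero_le_two, sqrt_sq hq]

lemma stochPG_sub_stochPG_self_div_le {i : Fin K} (hi : i ≠ a) (hra : 0 < r a) :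
    (stochPG r a θ i - stochPG r a θ a) / stochPGNorm r a θ ≤ -(√2)⁻¹ := by
  have hq : 0 < r a * (1 - softmax θ a) :=
    mul_pos hra ((softmax_pos θ i).trans_le (softmax_le_one_sub_softmax hi))
  have hN : 0 < stochPGNorm r a θ :=
    hq.trans_le ((stochPG_self r a θ).symm.trans_le (stochPG_self_le_stochPGNorm r a θ))
  have hdiff : stochPG r a θ i - stochPG r a θ a ≤ -(r a * (1 - softmax θ a)) := by
    rw [stochPG_of_ne r a θ hi, stochPG_self]
    linarith [mul_pos (softmax_pos θ i) hra]
  calc (stochPG r a θ i - stochPG r a θ a) / stochPGNorm r a θ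
      ≤ -(r a * (1 - softmax θ a)) / stochPGNorm r a θ := by gcongr
    _ ≤ -(√2)⁻¹ := by
      rw [neg_div, neg_le_neg_iff, le_div_iff₀ hN, inv_mul_le_iff₀ (by positivity)]
      exact stochPGNorm_le_sqrt_two_mul r a θ hra.le

end StochPG

section GNPG

variable {K : ℕ} (r : Fin K → ℝ) (η : ℝ)

noncomputable def gnpgStep (a : Fin K) (θ : Fin K → ℝ) : Fin K → ℝ :=
  fun i => θ i + η * (stochPG r a θ i / stochPGNorm r a θ)

lemma oddsAgainst_gnpgStep_le {a : Fin K} (hra : 0 < r a) (hη : 0 ≤ η) (θ : Fin K → ℝ) :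
    oddsAgainst a (gnpgStep r η a θ) ≤ exp (-(η / √2)) * oddsAgainst a θ := by
  rw [oddsAgainst_eq_sum_exp_sub, oddsAgainst_eq_sum_exp_sub, mul_sum]
  gcongr with i hi
  rw [← exp_add, exp_le_exp, gnpgStep, gnpgStep]
  have hstep := mul_le_mul_of_nonneg_left
    (stochPG_sub_stochPG_self_div_le r a θ (mem_filter.1 hi).2 hra) hη
  have hsplit : η * ((stochPG r a θ i - stochPG r a θ a) / stochPGNorm r a θ) =
      η * (stochPG r a θ i / stochPGNorm r a θ) - η * (stochPG r a θ a / stochPGNorm r a θ) := by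
    ring
  rw [div_eq_mul_inv η]
  linarith

lemma oddsAgainst_iterate_gnpgStep_le {a : Fin K} (hra : 0 < r a) (hη : 0 ≤ η)
    (θ : Fin K → ℝ) (t : ℕ) :
    oddsAgainst a ((gnpgStep r η a)^[t] θ) ≤ exp (-(η / √2)) ^ t * oddsAgainst a θ := by
  induction t with
  | zero => simp
  | succ t ih =>
    rw [Function.iterate_succ_apply', pow_succ', mul_assoc]
    exact (oddsAgainst_gnpgStep_le r η hra hη _).trans (by gcongr)

lemma tendsto_softmax_iterate_gnpgStep {a : Fin K} (hra : 0 < r a) (hη : 0 < η)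
    (θ : Fin K → ℝ) : Tendsto (fun t => softmax ((gnpgStep r η a)^[t] θ) a) atTop (𝓝 1) := by
  have hc : exp (-(η / √2)) < 1 := exp_lt_one_iff.2 (neg_lt_zero.2 (by positivity))
  have hodds : Tendsto (fun t => oddsAgainst a ((gnpgStep r η a)^[t] θ)) atTop (𝓝 0) := by
    refine squeeze_zero (fun t => oddsAgainst_nonneg a _)
      (oddsAgainst_iterate_gnpgStep_le r η hra hη.le θ) ?_
    simpa using (tendsto_pow_atTop_nhds_zero_of_lt_one (exp_pos _).le hc).mul_const
      (oddsAgainst a θ)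
  simp_rw [softmax_eq_inv_one_add_oddsAgainst]
  simpa using (hodds.const_add 1).inv₀ (by norm_num)

lemma inv_one_sub_exp_neg_le {x : ℝ} (hx : 0 < x) : (1 - exp (-x))⁻¹ ≤ exp x / x := by
  have h : x ≤ exp x - 1 := by linarith [add_one_le_exp x]
  rw [exp_neg, show 1 - (exp x)⁻¹ = (exp x - 1) / exp x by field_simp, inv_div]
  gcongr

lemma exp_neg_le_prod_softmax_iterate_gnpgStep {a : Fin K} (hra : 0 < r a) (hη : 0 < η)
    (θ : Fin K → ℝ) (T : ℕ) :
    exp (-(√2 * exp (η / √2) / η) * oddsAgainst a θ) ≤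
      ∏ t ∈ range T, softmax ((gnpgStep r η a)^[t] θ) a := by
  have hc : exp (-(η / √2)) < 1 := exp_lt_one_iff.2 (neg_lt_zero.2 (by positivity))
  have hodds := oddsAgainst_nonneg a θ
  have hsum : ∑ t ∈ range T, oddsAgainst a ((gnpgStep r η a)^[t] θ) ≤
      √2 * exp (η / √2) / η * oddsAgainst a θ :=
    calc ∑ t ∈ range T, oddsAgainst a ((gnpgStep r η a)^[t] θ)
        ≤ ∑ t ∈ range T, exp (-(η / √2)) ^ t * oddsAgainst a θ :=
          sum_le_sum fun t _ => oddsAgainst_iterate_gnpgStep_le r η hra hη.le θ t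
      _ = (∑ t ∈ range T, exp (-(η / √2)) ^ t) * oddsAgainst a θ := (sum_mul ..).symm
      _ ≤ (1 - exp (-(η / √2)))⁻¹ * oddsAgainst a θ := by
          gcongr
          simpa using geom_sum_Ico_le_of_lt_one (m := 0) (n := T) (exp_pos _).le hc
      _ ≤ exp (η / √2) / (η / √2) * oddsAgainst a θ := by
          gcongr; exact inv_one_sub_exp_neg_le (by positivity)
      _ = √2 * exp (η / √2) / η * oddsAgainst a θ := by
          rw [div_div_eq_mul_div, mul_comm (exp _)]
  calc exp (-(√2 * exp (η / √2) / η) * oddsAgainst a θ)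
      ≤ exp (-∑ t ∈ range T, oddsAgainst a ((gnpgStep r η a)^[t] θ)) := by
        rw [exp_le_exp, neg_mul, neg_le_neg_iff]; exact hsum
    _ = ∏ t ∈ range T, exp (-oddsAgainst a ((gnpgStep r η a)^[t] θ)) := by
        rw [← sum_neg_distrib, exp_sum]
    _ ≤ ∏ t ∈ range T, softmax ((gnpgStep r η a)^[t] θ) a :=
        prod_le_prod (fun _ _ => (exp_pos _).le) fun _ _ => exp_neg_oddsAgainst_le_softmax a _

end GNPG

lemma measureReal_inter_eq_setIntegral_of_condExp_eq {Ω : Type*} {m mΩ : MeasurableSpace Ω}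
    {P : Measure Ω} [IsFiniteMeasure P] (hm : m ≤ mΩ) {A B : Set Ω} (hA : MeasurableSet[m] A)
    (hB : MeasurableSet B) {p : Ω → ℝ} (hp : P[B.indicator 1|m] =ᵐ[P] p) :
    P.real (A ∩ B) = ∫ ω in A, p ω ∂P := by
  rw [← setIntegral_congr_ae (hm A hA) (hp.mono fun ω h _ => h),
    setIntegral_condExp hm ((integrable_const 1).indicator hB) hA,
    setIntegral_indicator hB]
  simp

section OnPolicy

variable {K : ℕ} {Ω : Type*} {mΩ : MeasurableSpace Ω} {P : Measure Ω} {F : Filtration ℕ mΩ}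
  {act : ℕ → Ω → Fin K} {θ : ℕ → Ω → Fin K → ℝ} {U : Fin K → (Fin K → ℝ) → Fin K → ℝ}
  {θinit : Fin K → ℝ}

lemma eq_iterate_of_forall_lt_act_eq (hθ0 : ∀ ω, θ 0 ω = θinit)
    (hupd : ∀ t ω, θ (t + 1) ω = U (act t ω) (θ t ω)) {a : Fin K} {ω : Ω} :
    ∀ {T : ℕ}, (∀ t < T, act t ω = a) → θ T ω = (U a)^[T] θinit
  | 0, _ => hθ0 ω
  | T + 1, h => by
    rw [hupd, h T T.lt_succ_self, Function.iterate_succ_apply',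
      eq_iterate_of_forall_lt_act_eq hθ0 hupd fun t ht => h t (ht.trans T.lt_succ_self)]

lemma measurableSet_forall_lt_act_eq (hactmeas : ∀ t, Measurable[F (t + 1)] (act t))
    (a : Fin K) (T : ℕ) : MeasurableSet[F T] {ω | ∀ t < T, act t ω = a} := by
  simp only [Set.ofPred_forall]
  exact .iInter fun t => .iInter fun ht => F.mono ht _ (hactmeas t (measurableSet_singleton a))

variable [IsProbabilityMeasure P]

lemma measureReal_forall_lt_act_eq (hθ0 : ∀ ω, θ 0 ω = θinit)
    (hactmeas : ∀ t, Measurable[F (t + 1)] (act t))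
    (hcond : ∀ t b, P[(fun ω => if act t ω = b then (1 : ℝ) else 0)|F t]
      =ᵐ[P] fun ω => softmax (θ t ω) b)
    (hupd : ∀ t ω, θ (t + 1) ω = U (act t ω) (θ t ω)) (a : Fin K) (T : ℕ) :
    P.real {ω | ∀ t < T, act t ω = a} = ∏ t ∈ range T, softmax ((U a)^[t] θinit) a := by
  induction T with
  | zero => simp
  | succ T ih =>
    have hE := measurableSet_forall_lt_act_eq hactmeas a T
    have hB : MeasurableSet {ω | act T ω = a} := F.le _ _ (hactmeas T (measurableSet_singleton a))
    have hind : (fun ω => if act T ω = a then (1 : ℝ) else 0) = {ω | act T ω = a}.indicator 1 := by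
      ext ω; simp [Set.indicator_apply]
    calc P.real {ω | ∀ t < T + 1, act t ω = a}
        = P.real ({ω | ∀ t < T, act t ω = a} ∩ {ω | act T ω = a}) := by
          simp only [Nat.forall_lt_succ_right, Set.ofPred_and]
      _ = ∫ ω in {ω | ∀ t < T, act t ω = a}, softmax (θ T ω) a ∂P :=
          measureReal_inter_eq_setIntegral_of_condExp_eq (F.le T) hE hB (hind ▸ hcond T a)
      _ = ∫ _ in {ω | ∀ t < T, act t ω = a}, softmax ((U a)^[T] θinit) a ∂P :=
          setIntegral_congr_fun (F.le T _ hE) fun ω hω => by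
            rw [eq_iterate_of_forall_lt_act_eq hθ0 hupd hω]
      _ = ∏ t ∈ range (T + 1), softmax ((U a)^[t] θinit) a := by
          rw [setIntegral_const, smul_eq_mul, ih, prod_range_succ]

lemma ofReal_le_measure_forall_act_eq (hθ0 : ∀ ω, θ 0 ω = θinit)
    (hactmeas : ∀ t, Measurable[F (t + 1)] (act t))
    (hcond : ∀ t b, P[(fun ω => if act t ω = b then (1 : ℝ) else 0)|F t]
      =ᵐ[P] fun ω => softmax (θ t ω) b)
    (hupd : ∀ t ω, θ (t + 1) ω = U (act t ω) (θ t ω)) {a : Fin K} {B : ℝ}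
    (hB : ∀ T, B ≤ ∏ t ∈ range T, softmax ((U a)^[t] θinit) a) :
    ENNReal.ofReal B ≤ P {ω | ∀ t, act t ω = a} := by
  have hiInter : {ω | ∀ t, act t ω = a} = ⋂ T, {ω | ∀ t < T, act t ω = a} := by
    ext ω
    simp only [Set.mem_ofPred_eq, Set.mem_iInter]
    exact ⟨fun h T t _ => h t, fun h t => h (t + 1) t t.lt_succ_self⟩
  have hanti : Antitone fun T => {ω | ∀ t < T, act t ω = a} :=
    fun _ _ hST _ hω t ht => hω t (ht.trans_le hST)
  rw [hiInter, hanti.measure_iInter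
    (fun T => (F.le T _ (measurableSet_forall_lt_act_eq hactmeas a T)).nullMeasurableSet)
    ⟨0, measure_ne_top _ _⟩]
  refine le_iInf fun T => ?_
  rw [← ofReal_measureReal, measureReal_forall_lt_act_eq hθ0 hactmeas hcond hupd]
  exact ENNReal.ofReal_le_ofReal (hB T)

end OnPolicy

-- `θ 0` is the paper's `θ_1` and `act t` the paper's `a_{t+1}`.
theorem stochastic_gnpg_fails_with_positive_probability_general
    {K : ℕ} (r : Fin K → ℝ)
    (hr : ∀ a, 0 < r a ∧ r a ≤ 1)
    (η : ℝ) (hη : 0 < η)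
    {Ω : Type*} {mΩ : MeasurableSpace Ω} (P : Measure Ω) [IsProbabilityMeasure P]
    (F : Filtration ℕ mΩ)
    (act : ℕ → Ω → Fin K) (θ : ℕ → Ω → Fin K → ℝ)
    (θinit : Fin K → ℝ) (hθ0 : ∀ ω, θ 0 ω = θinit)
    (hactmeas : ∀ t, Measurable[F (t + 1)] (act t))
    (hcond : ∀ t b, P[(fun ω => if act t ω = b then (1 : ℝ) else 0)|F t]
      =ᵐ[P] fun ω => softmax (θ t ω) b)
    (hupd : ∀ t ω, θ (t + 1) ω = fun i =>
      θ t ω i + η * (stochPG r (act t ω) (θ t ω) i / stochPGNorm r (act t ω) (θ t ω))) :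
    ∀ a : Fin K,
      ENNReal.ofReal
          (Real.exp (-(Real.sqrt 2 * Real.exp (η / Real.sqrt 2) / η) *
            ((∑ a' ∈ Finset.univ.filter (fun a' => a' ≠ a), Real.exp (θinit a')) /
              Real.exp (θinit a)))) ≤
        P {ω | ∀ t, act t ω = a} ∧
      0 < P {ω | ∀ t, act t ω = a} ∧
      ∀ ω, (∀ t, act t ω = a) →
        Tendsto (fun t => softmax (θ t ω) a) atTop (nhds 1) := by
  intro a
  have hstep : ∀ t ω, θ (t + 1) ω = gnpgStep r η (act t ω) (θ t ω) := hupd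
  have hlow : ENNReal.ofReal (exp (-(√2 * exp (η / √2) / η) * oddsAgainst a θinit)) ≤
      P {ω | ∀ t, act t ω = a} :=
    ofReal_le_measure_forall_act_eq hθ0 hactmeas hcond hstep
      (exp_neg_le_prod_softmax_iterate_gnpgStep r η (hr a).1 hη θinit)
  refine ⟨hlow, (ENNReal.ofReal_pos.2 (exp_pos _)).trans_le hlow, fun ω hω => ?_⟩
  simpa only [eq_iterate_of_forall_lt_act_eq hθ0 hstep fun t _ => hω t] using
    tendsto_softmax_iterate_gnpgStep r η (hr a).1 hη θinit

/-- On-policy stochastic GNPG fails with positive probability: for every action `a`,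
with the update `θ_{t+1} = θ_t + η·g_{a_t}(θ_t)/‖g_{a_t}(θ_t)‖₂`, the probability of
sampling `a` forever is at least
`exp(−(√2·e^{η/√2}/η)·(Σ_{a'≠a} e^{θ_1(a')})/e^{θ_1(a)}) > 0`, and on that event
`π_{θ_t}(a) → 1`. (Here `θ 0` is the paper's `θ_1` and `act t` the paper's `a_{t+1}`.) -/
theorem stochastic_gnpg_fails_with_positive_probability
    {K : ℕ} (hK : 2 ≤ K) (r : Fin K → ℝ)
    (hr : ∀ a, 0 < r a ∧ r a ≤ 1)
    (astar : Fin K) (hstar : ∀ a, a ≠ astar → r a < r astar)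
    (η : ℝ) (hη : 0 < η)
    {Ω : Type*} {mΩ : MeasurableSpace Ω} (P : Measure Ω) [IsProbabilityMeasure P]
    (F : Filtration ℕ mΩ)
    (act : ℕ → Ω → Fin K) (θ : ℕ → Ω → Fin K → ℝ)
    (θinit : Fin K → ℝ) (hθ0 : ∀ ω, θ 0 ω = θinit)
    (hθmeas : ∀ t, Measurable[F t] (θ t))
    (hactmeas : ∀ t, Measurable[F (t + 1)] (act t))
    (hcond : ∀ t b, P[(fun ω => if act t ω = b then (1 : ℝ) else 0)|F t]
      =ᵐ[P] fun ω => softmax (θ t ω) b)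
    (hupd : ∀ t ω, θ (t + 1) ω = fun i =>
      θ t ω i + η * (stochPG r (act t ω) (θ t ω) i / stochPGNorm r (act t ω) (θ t ω))) :
    ∀ a : Fin K,
      ENNReal.ofReal
          (Real.exp (-(Real.sqrt 2 * Real.exp (η / Real.sqrt 2) / η) *
            ((∑ a' ∈ Finset.univ.filter (fun a' => a' ≠ a), Real.exp (θinit a')) /
              Real.exp (θinit a)))) ≤
        P {ω | ∀ t, act t ω = a} ∧
      0 < P {ω | ∀ t, act t ω = a} ∧
      ∀ ω, (∀ t, act t ω = a) →
        Tendsto (fun t => softmax (θ t ω) a) atTop (nhds 1) :=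
  stochastic_gnpg_fails_with_positive_probability_general r hr η hη P F act θ θinit hθ0 hactmeas
    hcond hupd
end
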